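/- Let G be a connected finite simple graph of order at least two and let H be any finite simple graph with exactly i_H isolated vertices. Then χ_i(G ∘ H) ≤ χ_2(G)·|V(H)| − i_H·(χ_2(G) − χ_i(G)). -/

import Mathlib

open SimpleGraph Finset

variable {α β : Type*}

/-- The direct (tensor) product of two simple graphs. -/
def directProd (G : SimpleGraph α) (H : SimpleGraph β) : SimpleGraph (α × β) where
  Adj x y := G.Adj x.1 y.1 ∧ H.Adj x.2 y.2
  symm := ⟨fun x y h => ⟨h.1.symm, h.2.symm⟩⟩
  loopless := ⟨fun x h => G.irrefl h.1⟩

/-- The strong product of two simple graphs. -/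
def strongProd (G : SimpleGraph α) (H : SimpleGraph β) : SimpleGraph (α × β) where
  Adj x y := (x.1 = y.1 ∧ H.Adj x.2 y.2) ∨ (G.Adj x.1 y.1 ∧ x.2 = y.2) ∨
    (G.Adj x.1 y.1 ∧ H.Adj x.2 y.2)
  symm := by
    refine ⟨?_⟩
    rintro x y (⟨h1, h2⟩ | ⟨h1, h2⟩ | ⟨h1, h2⟩)
    · exact Or.inl ⟨h1.symm, h2.symm⟩
    · exact Or.inr (Or.inl ⟨h1.symm, h2.symm⟩)
    · exact Or.inr (Or.inr ⟨h1.symm, h2.symm⟩)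
  loopless := by
    refine ⟨?_⟩
    rintro x (⟨_, h⟩ | ⟨h, _⟩ | ⟨h, _⟩)
    · exact H.irrefl h
    · exact G.irrefl h
    · exact G.irrefl h

/-- The lexicographic product of two simple graphs. -/
def lexProd (G : SimpleGraph α) (H : SimpleGraph β) : SimpleGraph (α × β) where
  Adj x y := G.Adj x.1 y.1 ∨ (x.1 = y.1 ∧ H.Adj x.2 y.2)
  symm := by
    refine ⟨?_⟩
    rintro x y (h | ⟨h1, h2⟩)
    · exact Or.inl h.symm
    · exact Or.inr ⟨h1.symm, h2.symm⟩
  loopless := by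
    refine ⟨?_⟩
    rintro x (h | ⟨_, h⟩)
    · exact G.irrefl h
    · exact H.irrefl h

/-- The corona product `G ⊙ H`: vertex `(v, none)` is the vertex `v` of `G`, and
`(v, some h)` is the vertex `h` of the copy of `H` attached at `v`. -/
def corona (G : SimpleGraph α) (H : SimpleGraph β) : SimpleGraph (α × Option β) where
  Adj x y :=
    (x.2 = none ∧ y.2 = none ∧ G.Adj x.1 y.1) ∨
    (x.1 = y.1 ∧ x.2 = none ∧ y.2 ≠ none) ∨
    (x.1 = y.1 ∧ x.2 ≠ none ∧ y.2 = none) ∨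
    (x.1 = y.1 ∧ ∃ a b, x.2 = some a ∧ y.2 = some b ∧ H.Adj a b)
  symm := by
    refine ⟨?_⟩
    rintro x y (⟨h1, h2, h3⟩ | ⟨h1, h2, h3⟩ | ⟨h1, h2, h3⟩ | ⟨h1, a, b, h2, h3, h4⟩)
    · exact Or.inl ⟨h2, h1, h3.symm⟩
    · exact Or.inr (Or.inr (Or.inl ⟨h1.symm, h3, h2⟩))
    · exact Or.inr (Or.inl ⟨h1.symm, h3, h2⟩)
    · exact Or.inr (Or.inr (Or.inr ⟨h1.symm, b, a, h3, h2, h4.symm⟩))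
  loopless := by
    refine ⟨?_⟩
    rintro x (⟨_, _, h⟩ | ⟨_, h1, h2⟩ | ⟨_, h1, h2⟩ | ⟨_, a, b, h2, h3, h4⟩)
    · exact G.irrefl h
    · exact h2 h1
    · exact h1 h2
    · rw [h2] at h3
      injection h3 with h5
      subst h5
      exact H.irrefl h4

/-- `f` is an injective coloring of `G`: no vertex has two distinct neighbors
with the same color. -/
def IsInjColoring {V : Type*} (G : SimpleGraph V) {n : ℕ} (f : V → Fin n) : Prop :=
  ∀ v u w, G.Adj v u → G.Adj v w → u ≠ w → f u ≠ f w

/-- The injective chromatic number: the least `n` such that `G` admits an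
injective coloring with `n` colors. -/
noncomputable def injChrom {V : Type*} (G : SimpleGraph V) : ℕ :=
  sInf {n | ∃ f : V → Fin n, IsInjColoring G f}

/-- `f` is a 2-distance coloring of `G`: distinct vertices at distance at most
two get distinct colors. -/
def IsDistTwoColoring {V : Type*} (G : SimpleGraph V) {n : ℕ} (f : V → Fin n) : Prop :=
  ∀ u v, u ≠ v → (G.Adj u v ∨ ∃ w, G.Adj u w ∧ G.Adj w v) → f u ≠ f v

/-- The 2-distance chromatic number of `G`. -/
noncomputable def distTwoChrom {V : Type*} (G : SimpleGraph V) : ℕ :=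
  sInf {n | ∃ f : V → Fin n, IsDistTwoColoring G f}

/-- for a connected finite graph `G` of order at least two and any finite
graph `H` with `i_H` isolated vertices,
`χ_i(G ∘ H) ≤ χ₂(G)·|V(H)| − i_H·(χ₂(G) − χ_i(G))`. -/
theorem injChrom_lexProd_le {α β : Type*} [Fintype α] [Fintype β]
    (G : SimpleGraph α) (H : SimpleGraph β)
    (hG : G.Connected) (hcard : 2 ≤ Fintype.card α) :
    injChrom (lexProd G H) ≤
      distTwoChrom G * Fintype.card β -
        Nat.card {h : β // ∀ h', ¬ H.Adj h h'} * (distTwoChrom G - injChrom G) := by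
  classical
  set k2 := distTwoChrom G with hk2def
  set ki := injChrom G with hkidef
  -- a 2-distance coloring with k2 colors exists
  have hne2 : {n | ∃ f : α → Fin n, IsDistTwoColoring G f}.Nonempty := by
    refine ⟨Fintype.card α, Fintype.equivFin α, ?_⟩
    intro u v huv _ h
    exact huv ((Fintype.equivFin α).injective h)
  obtain ⟨f2, hf2⟩ : ∃ f : α → Fin k2, IsDistTwoColoring G f := Nat.sInf_mem hne2
  -- f2 is also an injective coloring
  have hf2inj : IsInjColoring G f2 := by
    intro v u w hu hw huw
    exact hf2 u w huw (Or.inr ⟨v, hu.symm, hw⟩)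
  have hnei : {n | ∃ f : α → Fin n, IsInjColoring G f}.Nonempty := ⟨k2, f2, hf2inj⟩
  obtain ⟨fi, hfi⟩ : ∃ f : α → Fin ki, IsInjColoring G f := Nat.sInf_mem hnei
  have hkile : ki ≤ k2 := Nat.sInf_le ⟨f2, hf2inj⟩
  set P : β → Prop := fun h => ∀ h', ¬ H.Adj h h' with hPdef
  have hi : Nat.card {h : β // ∀ h', ¬ H.Adj h h'} = Fintype.card {h : β // P h} :=
    Nat.card_eq_fintype_card
  set iN := Fintype.card {h : β // P h} with hiNdef
  set m := Fintype.card β with hmdef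
  have him : iN ≤ m := Fintype.card_subtype_le _
  have hcompl : Fintype.card {h : β // ¬ P h} = m - iN := by
    rw [Fintype.card_subtype_compl]
  let e2 : {h : β // P h} ≃ Fin iN := Fintype.equivFin _
  let e1 : {h : β // ¬ P h} ≃ Fin (m - iN) := Fintype.equivFinOfCardEq hcompl
  set n := k2 * (m - iN) + ki * iN with hndef
  have hcardsum : Fintype.card ((Fin k2 × Fin (m - iN)) ⊕ (Fin ki × Fin iN)) = n := by
    simp [hndef]
  let E : ((Fin k2 × Fin (m - iN)) ⊕ (Fin ki × Fin iN)) ≃ Fin n :=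
    Fintype.equivFinOfCardEq hcardsum
  let F : α × β → (Fin k2 × Fin (m - iN)) ⊕ (Fin ki × Fin iN) := fun x =>
    if hp : P x.2 then Sum.inr (fi x.1, e2 ⟨x.2, hp⟩) else Sum.inl (f2 x.1, e1 ⟨x.2, hp⟩)
  have hmain : injChrom (lexProd G H) ≤ n := by
    refine Nat.sInf_le ⟨fun x => E (F x), ?_⟩
    rintro ⟨a, b⟩ ⟨g, h⟩ ⟨g', h'⟩ hu hw hne heq
    have hFF : F (g, h) = F (g', h') := E.injective heq
    change G.Adj a g ∨ (a = g ∧ H.Adj b h) at hu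
    change G.Adj a g' ∨ (a = g' ∧ H.Adj b h') at hw
    by_cases hp : P h <;> by_cases hp' : P h'
    · rw [show F (g, h) = Sum.inr (fi g, e2 ⟨h, hp⟩) from dif_pos hp,
        show F (g', h') = Sum.inr (fi g', e2 ⟨h', hp'⟩) from dif_pos hp'] at hFF
      obtain ⟨hc, he⟩ := Prod.mk.injEq .. ▸ Sum.inr_injective hFF
      have hhh : h = h' := congrArg Subtype.val (e2.injective he)
      subst hhh
      have hgg : g ≠ g' := fun hg => hne (by rw [hg])
      have hu' : G.Adj a g := by
        rcases hu with h1 | ⟨_, h2⟩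
        · exact h1
        · exact absurd h2.symm (hp b)
      have hw' : G.Adj a g' := by
        rcases hw with h1 | ⟨_, h2⟩
        · exact h1
        · exact absurd h2.symm (hp' b)
      exact hfi a g g' hu' hw' hgg hc
    · rw [show F (g, h) = Sum.inr (fi g, e2 ⟨h, hp⟩) from dif_pos hp,
        show F (g', h') = Sum.inl (f2 g', e1 ⟨h', hp'⟩) from dif_neg hp'] at hFF
      cases hFF
    · rw [show F (g, h) = Sum.inl (f2 g, e1 ⟨h, hp⟩) from dif_neg hp,
        show F (g', h') = Sum.inr (fi g', e2 ⟨h', hp'⟩) from dif_pos hp'] at hFF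
      cases hFF
    · rw [show F (g, h) = Sum.inl (f2 g, e1 ⟨h, hp⟩) from dif_neg hp,
        show F (g', h') = Sum.inl (f2 g', e1 ⟨h', hp'⟩) from dif_neg hp'] at hFF
      obtain ⟨hc, he⟩ := Prod.mk.injEq .. ▸ Sum.inl_injective hFF
      have hhh : h = h' := congrArg Subtype.val (e1.injective he)
      subst hhh
      have hgg : g ≠ g' := fun hg => hne (by rw [hg])
      rcases hu with h1 | ⟨h1, _⟩ <;> rcases hw with h2 | ⟨h2, _⟩
      · exact hf2 g g' hgg (Or.inr ⟨a, h1.symm, h2⟩) hc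
      · exact hf2 g g' hgg (Or.inl (h2 ▸ h1).symm) hc
      · exact hf2 g g' hgg (Or.inl (h1 ▸ h2)) hc
      · exact hgg (h1.symm.trans h2)
  refine hmain.trans ?_
  rw [hi]
  obtain ⟨j, hj⟩ := Nat.exists_eq_add_of_le him
  obtain ⟨l, hl⟩ := Nat.exists_eq_add_of_le hkile
  rw [hndef, hj, hl]
  have e1 : ki + l - ki = l := by omega
  have e2 : iN + j - iN = j := by omega
  rw [e1, e2]
  have e3 : (ki + l) * (iN + j) = (ki + l) * j + ki * iN + iN * l := by ring
  rw [e3]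
  omega
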